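/- Let ξ₁, ξ₂ ∈ L²(ℝ^×, dt/|t|). For h ∈ ℝ \ {0,−1}, let F(h)(t) = ξ₁(t/(1+h)) · ξ₂(t/(1+h⁻¹)). Then for almost every h (with respect to dh/|h|), F(h) ∈ L²(ℝ^×, dt/|t|), and ∫_{ℝ^×} ‖F(h)‖₂² dh/|h| = ‖ξ₁‖₂² ‖ξ₂‖₂². -/

import Mathlib

/-!
Substituting `t = (1 + h) u` turns `‖F(h)‖₂²` into `∫ |ξ₁(u)|² |ξ₂(u h)|² du/|u|`, because
`(1 + h) / (1 + h⁻¹) = h`. Integrating in `h` and swapping the integrals by Tonelli, the inner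
integral `∫ |ξ₂(u h)|² dh/|h|` equals `‖ξ₂‖₂²` by invariance of `dh/|h|` under dilations, which
leaves `‖ξ₁‖₂² ‖ξ₂‖₂²`. Finiteness of this integral gives `F(h) ∈ L²` for almost every `h`.
-/

open MeasureTheory

/-- The measure `dt/|t|` on `ℝ`, Haar measure of `ℝˣ`. -/
noncomputable def mulHaar : Measure ℝ :=
  volume.withDensity fun t => ENNReal.ofReal (1 / |t|)

/-- `F(h) = λ(1+h)ξ₁ · λ(1+h⁻¹)ξ₂`, i.e. `F(h)(t) = ξ₁(t/(1+h)) · ξ₂(t/(1+h⁻¹))`. -/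
noncomputable def Fprod (ξ₁ ξ₂ : ℝ → ℂ) (h : ℝ) : ℝ → ℂ :=
  fun t => ξ₁ (t / (1 + h)) * ξ₂ (t / (1 + h⁻¹))

open scoped ENNReal

instance : SigmaFinite mulHaar := by
  unfold mulHaar; infer_instance

instance : NullSingletonClass mulHaar := by
  unfold mulHaar; infer_instance

lemma map_mul_left_mulHaar {a : ℝ} (ha : a ≠ 0) : Measure.map (a * ·) mulHaar = mulHaar := by
  ext s hs
  set ρ : ℝ → ℝ≥0∞ := fun t => ENNReal.ofReal (1 / |t|)
  have hρ : ∀ t, ((a * ·) ⁻¹' s).indicator ρ t = ENNReal.ofReal |a| * s.indicator ρ (a * t) := by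
    intro t
    by_cases ht : a * t ∈ s
    · rw [Set.indicator_of_mem ht, Set.indicator_of_mem (by exact ht),
        ← ENNReal.ofReal_mul (abs_nonneg a), abs_mul, mul_one_div,
        div_mul_cancel_left₀ (abs_ne_zero.2 ha)]
      simp [ρ]
    · rw [Set.indicator_of_notMem ht, Set.indicator_of_notMem (by exact ht), mul_zero]
  calc Measure.map (a * ·) mulHaar s
      = ∫⁻ t, ((a * ·) ⁻¹' s).indicator ρ t := by
        rw [Measure.map_apply (measurable_const_mul a) hs, mulHaar,
          withDensity_apply _ (hs.preimage (measurable_const_mul a)),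
          lintegral_indicator (hs.preimage (measurable_const_mul a))]
    _ = ENNReal.ofReal |a| * ∫⁻ t, s.indicator ρ t ∂Measure.map (a * ·) volume := by
        rw [(measurableEmbedding_mulLeft₀ ha).lintegral_map,
          ← lintegral_const_mul' _ _ ENNReal.ofReal_ne_top]
        simp only [hρ]
    _ = mulHaar s := by
        rw [Real.map_volume_mul_left ha, lintegral_smul_measure, smul_eq_mul, ← mul_assoc,
          ← ENNReal.ofReal_mul (abs_nonneg a), abs_inv, mul_inv_cancel₀ (abs_ne_zero.2 ha),
          ENNReal.ofReal_one, one_mul, lintegral_indicator hs, mulHaar, withDensity_apply _ hs]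

lemma measurePreserving_mul_left_mulHaar {a : ℝ} (ha : a ≠ 0) :
    MeasurePreserving (a * ·) mulHaar mulHaar :=
  ⟨measurable_const_mul a, map_mul_left_mulHaar ha⟩

lemma lintegral_comp_mul_left_mulHaar {a : ℝ} (ha : a ≠ 0) (f : ℝ → ℝ≥0∞) :
    ∫⁻ t, f (a * t) ∂mulHaar = ∫⁻ t, f t ∂mulHaar :=
  (measurePreserving_mul_left_mulHaar ha).lintegral_comp_emb (measurableEmbedding_mulLeft₀ ha) f

lemma eLpNorm_two_sq {α E : Type*} [MeasurableSpace α] [NormedAddCommGroup E] (f : α → E)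
    (μ : Measure α) : eLpNorm f 2 μ ^ 2 = ∫⁻ x, ‖f x‖ₑ ^ 2 ∂μ := by
  simpa using eLpNorm_nnreal_pow_eq_lintegral (f := f) (μ := μ) (p := 2) two_ne_zero

lemma one_add_inv_ne_zero {h : ℝ} (hh : h ≠ -1) : 1 + h⁻¹ ≠ 0 := by
  rwa [Ne, add_comm, add_eq_zero_iff_eq_neg, inv_eq_iff_eq_inv, inv_neg, inv_one]

lemma Fprod_ae_eq_Fprod {ξ₁ ξ₂ g₁ g₂ : ℝ → ℂ} (h₁ : ξ₁ =ᵐ[mulHaar] g₁) (h₂ : ξ₂ =ᵐ[mulHaar] g₂)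
    {h : ℝ} (hh : h ≠ -1) : Fprod ξ₁ ξ₂ h =ᵐ[mulHaar] Fprod g₁ g₂ h := by
  have hh' : 1 + h ≠ 0 := by contrapose! hh; linarith
  have e₁ := (measurePreserving_mul_left_mulHaar (inv_ne_zero hh')
    ).quasiMeasurePreserving.ae_eq_comp h₁
  have e₂ := (measurePreserving_mul_left_mulHaar (inv_ne_zero (one_add_inv_ne_zero hh))
    ).quasiMeasurePreserving.ae_eq_comp h₂
  filter_upwards [e₁, e₂] with t ht₁ ht₂
  simp only [Fprod, div_eq_inv_mul]
  exact congrArg₂ (· * ·) ht₁ ht₂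

lemma eLpNorm_Fprod_sq (ξ₁ ξ₂ : ℝ → ℂ) {h : ℝ} (h0 : h ≠ 0) (h1 : h ≠ -1) :
    eLpNorm (Fprod ξ₁ ξ₂ h) 2 mulHaar ^ 2
      = ∫⁻ u, ‖ξ₁ u‖ₑ ^ 2 * ‖ξ₂ (u * h)‖ₑ ^ 2 ∂mulHaar := by
  have h1' : 1 + h ≠ 0 := by contrapose! h1; linarith
  rw [eLpNorm_two_sq, ← lintegral_comp_mul_left_mulHaar h1']
  refine lintegral_congr fun u => ?_
  have hu : (1 + h) * u / (1 + h⁻¹) = u * h := by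
    rw [div_eq_iff (one_add_inv_ne_zero h1)]; field_simp; ring
  rw [Fprod, mul_div_cancel_left₀ u h1', hu, enorm_mul, mul_pow]

lemma lintegral_lintegral_mul_comp_mul {f g : ℝ → ℝ≥0∞} (hf : Measurable f) (hg : Measurable g) :
    ∫⁻ h, ∫⁻ u, f u * g (u * h) ∂mulHaar ∂mulHaar
      = (∫⁻ u, f u ∂mulHaar) * ∫⁻ v, g v ∂mulHaar := by
  rw [lintegral_lintegral_swap (by fun_prop), ← lintegral_mul_const _ hf]
  refine lintegral_congr_ae ?_
  filter_upwards [Measure.ae_ne mulHaar 0] with u hu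
  rw [lintegral_const_mul _ (by fun_prop), lintegral_comp_mul_left_mulHaar hu]

lemma measurable_lintegral_mul_comp_mul {μ : Measure ℝ} [SFinite μ] {f g : ℝ → ℝ≥0∞}
    (hf : Measurable f) (hg : Measurable g) : Measurable fun h => ∫⁻ u, f u * g (u * h) ∂μ :=
  Measurable.lintegral_prod_right' (f := fun p : ℝ × ℝ => f p.2 * g (p.2 * p.1)) (by fun_prop)

lemma stronglyMeasurable_Fprod {g₁ g₂ : ℝ → ℂ} (hg₁ : StronglyMeasurable g₁)
    (hg₂ : StronglyMeasurable g₂) (h : ℝ) : StronglyMeasurable (Fprod g₁ g₂ h) :=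
  (hg₁.comp_measurable (by fun_prop)).mul (hg₂.comp_measurable (by fun_prop))

/-- For `ξ₁, ξ₂ ∈ L²(ℝˣ, dt/|t|)`, the pointwise product of translates
`F(h) = λ(1+h)ξ₁ · λ(1+h⁻¹)ξ₂` lies in `L²` for almost every `h` (w.r.t. `dh/|h|`),
and `∫ ‖F(h)‖₂² dh/|h| = ‖ξ₁‖₂² ‖ξ₂‖₂²`. -/
theorem Fprod_ae_memLp_and_integral (ξ₁ ξ₂ : ℝ → ℂ)
    (h₁ : MemLp ξ₁ 2 mulHaar) (h₂ : MemLp ξ₂ 2 mulHaar) :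
    (∀ᵐ h ∂mulHaar, MemLp (Fprod ξ₁ ξ₂ h) 2 mulHaar) ∧
    (∫⁻ h, eLpNorm (Fprod ξ₁ ξ₂ h) 2 mulHaar ^ 2 ∂mulHaar
      = eLpNorm ξ₁ 2 mulHaar ^ 2 * eLpNorm ξ₂ 2 mulHaar ^ 2) := by
  obtain ⟨g₁, hg₁, hξg₁⟩ := h₁.aestronglyMeasurable
  obtain ⟨g₂, hg₂, hξg₂⟩ := h₂.aestronglyMeasurable
  have hN₁ : Measurable fun u => ‖g₁ u‖ₑ ^ 2 := by fun_prop
  have hN₂ : Measurable fun u => ‖g₂ u‖ₑ ^ 2 := by fun_prop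
  set K : ℝ → ℝ≥0∞ := fun h => ∫⁻ u, ‖g₁ u‖ₑ ^ 2 * ‖g₂ (u * h)‖ₑ ^ 2 ∂mulHaar
  have hFg : ∀ᵐ h ∂mulHaar, Fprod ξ₁ ξ₂ h =ᵐ[mulHaar] Fprod g₁ g₂ h :=
    (Measure.ae_ne mulHaar (-1)).mono fun h hh => Fprod_ae_eq_Fprod hξg₁ hξg₂ hh
  have hFK : ∀ᵐ h ∂mulHaar, eLpNorm (Fprod ξ₁ ξ₂ h) 2 mulHaar ^ 2 = K h := by
    filter_upwards [hFg, Measure.ae_ne mulHaar 0, Measure.ae_ne mulHaar (-1)] with h hF h0 h1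
    rw [eLpNorm_congr_ae hF, eLpNorm_Fprod_sq g₁ g₂ h0 h1]
  have hK : ∫⁻ h, K h ∂mulHaar = eLpNorm ξ₁ 2 mulHaar ^ 2 * eLpNorm ξ₂ 2 mulHaar ^ 2 := by
    rw [eLpNorm_congr_ae hξg₁, eLpNorm_congr_ae hξg₂, eLpNorm_two_sq, eLpNorm_two_sq]
    exact lintegral_lintegral_mul_comp_mul hN₁ hN₂
  refine ⟨?_, (lintegral_congr_ae hFK).trans hK⟩
  have hKfin : ∀ᵐ h ∂mulHaar, K h < ∞ :=
    ae_lt_top (measurable_lintegral_mul_comp_mul hN₁ hN₂) (hK ▸ ENNReal.mul_ne_top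
      (ENNReal.pow_ne_top h₁.eLpNorm_ne_top) (ENNReal.pow_ne_top h₂.eLpNorm_ne_top))
  filter_upwards [hFg, hFK, hKfin] with h hF hnorm hfin
  exact ⟨(stronglyMeasurable_Fprod hg₁ hg₂ h).aestronglyMeasurable.congr hF.symm,
    (ENNReal.pow_lt_top_iff.1 (hnorm ▸ hfin)).resolve_right two_ne_zero⟩
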